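/- arXiv:1710.05533 — 3 statements merged into one kernel-verified Lean document; each statement's English description precedes it below -/
import Mathlib

section
/- Let 𝕌 ⊆ ℝ^N and 𝔻 ⊆ ℝ^M be nonempty closed convex sets with metric projections Π_𝕌 and Π_𝔻. Suppose (U*, λ*) ∈ 𝕌 × 𝔻 satisfies the fixed-point equations U* = Π_𝕌((1/τ_U)Π_𝕌(τ_U U* − α∇_U L(U*,λ*))) and λ* = Π_𝔻((1/τ_λ)Π_𝔻(τ_λ λ* + β∇_λ L(U*,λ*))). Given (U^ℓ, λ^ℓ) ∈ 𝕌 × 𝔻, define U^{ℓ+1} = Π_𝕌((1/τ_U)Π_𝕌(τ_U U^ℓ − α∇_U L(U^ℓ,λ^ℓ))) and λ^{ℓ+1} = Π_𝔻((1/τ_λ)Π_𝔻(τ_λ λ^ℓ + β∇_λ L(U^ℓ,λ^ℓ))). Writing ζ^ℓ = (U^ℓ, λ^ℓ) and ζ* = (U*, λ*), one has ‖ζ^{ℓ+1} − ζ*‖² ≤ max{1/τ_U², 1/τ_λ²}·‖ζ^ℓ − ζ*‖² + max{α²/τ_U², β²/τ_λ²}·‖Φ(ζ^ℓ) − Φ(ζ*)‖²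 − 2(α/τ_U²)⟨Φ₁(ζ^ℓ) − Φ₁(ζ*), U^ℓ − U*⟩ − 2(β/τ_λ²)⟨Φ₂(ζ^ℓ) − Φ₂(ζ*), λ^ℓ − λ*⟩. -/
/-!
Each block of the update is the metric projection applied twice with a rescaling `1/τ` in
between, so by firm nonexpansiveness of projections it is `1/τ`-Lipschitz. Since the fixed point
satisfies the same equation, the squared distance to it is at most `1/τ²` times the squared norm
of the difference of the arguments, and that difference is `(x - x*) - α (Φ(x) - Φ(x*))`, because
the shift `((1 - τ)/α) x` in `Φ` compensates the relaxation `τ x`. Expanding the square and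
bounding each block's coefficients by their maximum gives the inequality.
-/

open scoped RealInnerProductSpace

/-- Matrix-vector multiplication as a map between Euclidean spaces. -/
noncomputable def mulVecE {m n : ℕ} (A : Matrix (Fin m) (Fin n) ℝ)
    (x : EuclideanSpace ℝ (Fin n)) : EuclideanSpace ℝ (Fin m) :=
  (EuclideanSpace.equiv (Fin m) ℝ).symm (A.mulVec (EuclideanSpace.equiv (Fin n) ℝ x))

/-- Primal gradient of the Lagrangian:
`∇_U L(U,λ) = P̃ᵀ(P_b + P̃U) + ρU − D_dᵀλ`. -/
noncomputable def gradUL {N M K : ℕ} (Pt : Matrix (Fin K) (Fin N) ℝ)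
    (Dd : Matrix (Fin M) (Fin N) ℝ) (Pb : EuclideanSpace ℝ (Fin K)) (ρ : ℝ)
    (U : EuclideanSpace ℝ (Fin N)) (lam : EuclideanSpace ℝ (Fin M)) :
    EuclideanSpace ℝ (Fin N) :=
  mulVecE Pt.transpose (Pb + mulVecE Pt U) + ρ • U - mulVecE Dd.transpose lam

/-- Dual gradient of the Lagrangian: `∇_λ L(U,λ) = Y_b − D_d U`. -/
noncomputable def gradLL {N M : ℕ} (Dd : Matrix (Fin M) (Fin N) ℝ)
    (Yb : EuclideanSpace ℝ (Fin M)) (U : EuclideanSpace ℝ (Fin N)) :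
    EuclideanSpace ℝ (Fin M) :=
  Yb - mulVecE Dd U

/-- First component of the mapping `Φ`: `Φ₁(U,λ) = ∇_U L(U,λ) + ((1−τ_U)/α)U`. -/
noncomputable def Phi1 {N M K : ℕ} (Pt : Matrix (Fin K) (Fin N) ℝ)
    (Dd : Matrix (Fin M) (Fin N) ℝ) (Pb : EuclideanSpace ℝ (Fin K))
    (ρ α τU : ℝ) (U : EuclideanSpace ℝ (Fin N)) (lam : EuclideanSpace ℝ (Fin M)) :
    EuclideanSpace ℝ (Fin N) :=
  gradUL Pt Dd Pb ρ U lam + ((1 - τU)/α) • U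

/-- Second component of the mapping `Φ`: `Φ₂(U,λ) = −∇_λ L(U,λ) + ((1−τ_λ)/β)λ`. -/
noncomputable def Phi2 {N M : ℕ} (Dd : Matrix (Fin M) (Fin N) ℝ)
    (Yb : EuclideanSpace ℝ (Fin M)) (β τlam : ℝ)
    (U : EuclideanSpace ℝ (Fin N)) (lam : EuclideanSpace ℝ (Fin M)) :
    EuclideanSpace ℝ (Fin M) :=
  -gradLL Dd Yb U + ((1 - τlam)/β) • lam

/-- The variational characterization of the metric projection onto `S`. -/
def IsProjectionOnto {E : Type*} [NormedAddCommGroup E] [InnerProductSpace ℝ E]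
    (S : Set E) (p : E → E) : Prop :=
  ∀ x, p x ∈ S ∧ ∀ y ∈ S, ⟪x - p x, y - p x⟫ ≤ 0

namespace IsProjectionOnto

variable {E : Type*} [NormedAddCommGroup E] [InnerProductSpace ℝ E] {S : Set E} {p : E → E}

theorem norm_sub_sq_le_inner (hp : IsProjectionOnto S p) (x y : E) :
    ‖p x - p y‖ ^ 2 ≤ ⟪x - y, p x - p y⟫ := by
  have hx := (hp x).2 (p y) (hp y).1
  have hy := (hp y).2 (p x) (hp x).1
  have hsum : ⟪x - p x, p y - p x⟫ + ⟪y - p y, p x - p y⟫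
      = ‖p x - p y‖ ^ 2 - ⟪x - y, p x - p y⟫ := by
    rw [← real_inner_self_eq_norm_sq, ← neg_sub (p x) (p y), inner_neg_right, neg_add_eq_sub,
      ← inner_sub_left, ← inner_sub_left]
    congr 1
    abel
  linarith

theorem norm_sub_le (hp : IsProjectionOnto S p) (x y : E) : ‖p x - p y‖ ≤ ‖x - y‖ := by
  have h := (hp.norm_sub_sq_le_inner x y).trans (real_inner_le_norm _ _)
  rcases (norm_nonneg (p x - p y)).eq_or_lt with h0 | hpos
  · exact h0 ▸ norm_nonneg _
  · nlinarith

theorem norm_sub_sq_le_of_smul_comp (hp : IsProjectionOnto S p) (τ : ℝ) (a b : E) :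
    ‖p ((1 / τ) • p a) - p ((1 / τ) • p b)‖ ^ 2 ≤ 1 / τ ^ 2 * ‖a - b‖ ^ 2 := by
  have h : ‖p ((1 / τ) • p a) - p ((1 / τ) • p b)‖ ≤ |1 / τ| * ‖a - b‖ :=
    calc _ ≤ ‖(1 / τ) • p a - (1 / τ) • p b‖ := hp.norm_sub_le _ _
      _ = |1 / τ| * ‖p a - p b‖ := by rw [← smul_sub, norm_smul, Real.norm_eq_abs]
      _ ≤ |1 / τ| * ‖a - b‖ := by gcongr; exact hp.norm_sub_le a b
  calc _ ≤ (|1 / τ| * ‖a - b‖) ^ 2 := by gcongr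
    _ = 1 / τ ^ 2 * ‖a - b‖ ^ 2 := by rw [mul_pow, sq_abs, div_pow, one_pow]

theorem norm_sub_sq_le_of_sub_eq (hp : IsProjectionOnto S p) (τ α : ℝ) {a b v d : E}
    (h : a - b = v - α • d) :
    ‖p ((1 / τ) • p a) - p ((1 / τ) • p b)‖ ^ 2
      ≤ 1 / τ ^ 2 * ‖v‖ ^ 2 + α ^ 2 / τ ^ 2 * ‖d‖ ^ 2 - 2 * (α / τ ^ 2) * ⟪d, v⟫ := by
  have hexp : ‖v - α • d‖ ^ 2 = ‖v‖ ^ 2 - 2 * α * ⟪d, v⟫ + α ^ 2 * ‖d‖ ^ 2 := by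
    rw [norm_sub_sq_real, real_inner_smul_right, norm_smul, Real.norm_eq_abs, mul_pow, sq_abs,
      real_inner_comm]
    ring
  calc _ ≤ 1 / τ ^ 2 * ‖a - b‖ ^ 2 := hp.norm_sub_sq_le_of_smul_comp τ a b
    _ = _ := by rw [h, hexp]; ring

end IsProjectionOnto

theorem smul_sub_smul_sub_eq {E : Type*} [AddCommGroup E] [Module ℝ E] {α : ℝ} (hα : α ≠ 0)
    (τ : ℝ) (x x' g g' : E) :
    (τ • x - α • g) - (τ • x' - α • g')
      = (x - x') - α • ((g + ((1 - τ) / α) • x) - (g' + ((1 - τ) / α) • x')) := by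
  match_scalars <;> field_simp <;> ring

theorem add_le_max_mul_add_max_mul {a b c d x x' y y' s t A B : ℝ}
    (hx : 0 ≤ x) (hx' : 0 ≤ x') (hy : 0 ≤ y) (hy' : 0 ≤ y')
    (hA : A ≤ a * x + c * y - s) (hB : B ≤ b * x' + d * y' - t) :
    A + B ≤ max a b * (x + x') + max c d * (y + y') - s - t := by
  nlinarith [le_max_left a b, le_max_right a b, le_max_left c d, le_max_right c d]

theorem spds_one_iteration_inequality_general
    {N M K : ℕ}
    (Pt : Matrix (Fin K) (Fin N) ℝ) (Dd : Matrix (Fin M) (Fin N) ℝ)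
    (Pb : EuclideanSpace ℝ (Fin K)) (Yb : EuclideanSpace ℝ (Fin M))
    (ρ α β τU τlam : ℝ) (hα : 0 < α) (hβ : 0 < β)
    (SU : Set (EuclideanSpace ℝ (Fin N))) (SD : Set (EuclideanSpace ℝ (Fin M)))
    (projU : EuclideanSpace ℝ (Fin N) → EuclideanSpace ℝ (Fin N))
    (hprojU : ∀ x, projU x ∈ SU ∧ ∀ y ∈ SU, ⟪x - projU x, y - projU x⟫ ≤ 0)
    (projD : EuclideanSpace ℝ (Fin M) → EuclideanSpace ℝ (Fin M))
    (hprojD : ∀ x, projD x ∈ SD ∧ ∀ y ∈ SD, ⟪x - projD x, y - projD x⟫ ≤ 0)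
    (Ustar : EuclideanSpace ℝ (Fin N)) (lstar : EuclideanSpace ℝ (Fin M))
    (hfixU : Ustar = projU ((1/τU) • projU (τU • Ustar - α • gradUL Pt Dd Pb ρ Ustar lstar)))
    (hfixl : lstar = projD ((1/τlam) • projD (τlam • lstar + β • gradLL Dd Yb Ustar)))
    (Ul : EuclideanSpace ℝ (Fin N)) (ll : EuclideanSpace ℝ (Fin M))
    (Up : EuclideanSpace ℝ (Fin N)) (lp : EuclideanSpace ℝ (Fin M))
    (hUp : Up = projU ((1/τU) • projU (τU • Ul - α • gradUL Pt Dd Pb ρ Ul ll)))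
    (hlp : lp = projD ((1/τlam) • projD (τlam • ll + β • gradLL Dd Yb Ul))) :
    ‖Up - Ustar‖^2 + ‖lp - lstar‖^2 ≤
      max (1/τU^2) (1/τlam^2) * (‖Ul - Ustar‖^2 + ‖ll - lstar‖^2)
      + max (α^2/τU^2) (β^2/τlam^2) *
          (‖Phi1 Pt Dd Pb ρ α τU Ul ll - Phi1 Pt Dd Pb ρ α τU Ustar lstar‖^2
            + ‖Phi2 Dd Yb β τlam Ul ll - Phi2 Dd Yb β τlam Ustar lstar‖^2)
      - 2*(α/τU^2) *
          ⟪Phi1 Pt Dd Pb ρ α τU Ul ll - Phi1 Pt Dd Pb ρ α τU Ustar lstar, Ul - Ustar⟫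
      - 2*(β/τlam^2) *
          ⟪Phi2 Dd Yb β τlam Ul ll - Phi2 Dd Yb β τlam Ustar lstar, ll - lstar⟫ := by
  have hprimal := IsProjectionOnto.norm_sub_sq_le_of_sub_eq hprojU τU α
    (smul_sub_smul_sub_eq hα.ne' τU Ul Ustar (gradUL Pt Dd Pb ρ Ul ll)
      (gradUL Pt Dd Pb ρ Ustar lstar))
  have hdual := IsProjectionOnto.norm_sub_sq_le_of_sub_eq hprojD τlam β
    (smul_sub_smul_sub_eq hβ.ne' τlam ll lstar (-gradLL Dd Yb Ul) (-gradLL Dd Yb Ustar))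
  simp only [smul_neg, sub_neg_eq_add] at hdual
  rw [← hUp, ← hfixU] at hprimal
  rw [← hlp, ← hfixl] at hdual
  exact add_le_max_mul_add_max_mul (sq_nonneg _) (sq_nonneg _) (sq_nonneg _) (sq_nonneg _)
    hprimal hdual

/-- One-iteration inequality for the SPDS update, where
`‖ζ‖² = ‖U‖₂² + ‖λ‖₂²` on `ℝ^N × ℝ^M`. -/
theorem spds_one_iteration_inequality
    {N M K : ℕ} (hN : 0 < N) (hM : 0 < M) (hK : 0 < K)
    (Pt : Matrix (Fin K) (Fin N) ℝ) (Dd : Matrix (Fin M) (Fin N) ℝ)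
    (Pb : EuclideanSpace ℝ (Fin K)) (Yb : EuclideanSpace ℝ (Fin M))
    (ρ α β τU τlam : ℝ) (hρ : 0 ≤ ρ) (hα : 0 < α) (hβ : 0 < β)
    (hτU : τU ∈ Set.Ioo (0:ℝ) 1) (hτlam : τlam ∈ Set.Ioo (0:ℝ) 1)
    (SU : Set (EuclideanSpace ℝ (Fin N))) (SD : Set (EuclideanSpace ℝ (Fin M)))
    (hSUne : SU.Nonempty) (hSUcl : IsClosed SU) (hSUconv : Convex ℝ SU)
    (hSDne : SD.Nonempty) (hSDcl : IsClosed SD) (hSDconv : Convex ℝ SD)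
    (projU : EuclideanSpace ℝ (Fin N) → EuclideanSpace ℝ (Fin N))
    (hprojU : ∀ x, projU x ∈ SU ∧ ∀ y ∈ SU, ⟪x - projU x, y - projU x⟫ ≤ 0)
    (projD : EuclideanSpace ℝ (Fin M) → EuclideanSpace ℝ (Fin M))
    (hprojD : ∀ x, projD x ∈ SD ∧ ∀ y ∈ SD, ⟪x - projD x, y - projD x⟫ ≤ 0)
    (Ustar : EuclideanSpace ℝ (Fin N)) (lstar : EuclideanSpace ℝ (Fin M))
    (hUstarmem : Ustar ∈ SU) (hlstarmem : lstar ∈ SD)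
    (hfixU : Ustar = projU ((1/τU) • projU (τU • Ustar - α • gradUL Pt Dd Pb ρ Ustar lstar)))
    (hfixl : lstar = projD ((1/τlam) • projD (τlam • lstar + β • gradLL Dd Yb Ustar)))
    (Ul : EuclideanSpace ℝ (Fin N)) (ll : EuclideanSpace ℝ (Fin M))
    (hUlmem : Ul ∈ SU) (hllmem : ll ∈ SD)
    (Up : EuclideanSpace ℝ (Fin N)) (lp : EuclideanSpace ℝ (Fin M))
    (hUp : Up = projU ((1/τU) • projU (τU • Ul - α • gradUL Pt Dd Pb ρ Ul ll)))
    (hlp : lp = projD ((1/τlam) • projD (τlam • ll + β • gradLL Dd Yb Ul))) :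
    ‖Up - Ustar‖^2 + ‖lp - lstar‖^2 ≤
      max (1/τU^2) (1/τlam^2) * (‖Ul - Ustar‖^2 + ‖ll - lstar‖^2)
      + max (α^2/τU^2) (β^2/τlam^2) *
          (‖Phi1 Pt Dd Pb ρ α τU Ul ll - Phi1 Pt Dd Pb ρ α τU Ustar lstar‖^2
            + ‖Phi2 Dd Yb β τlam Ul ll - Phi2 Dd Yb β τlam Ustar lstar‖^2)
      - 2*(α/τU^2) *
          ⟪Phi1 Pt Dd Pb ρ α τU Ul ll - Phi1 Pt Dd Pb ρ α τU Ustar lstar, Ul - Ustar⟫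
      - 2*(β/τlam^2) *
          ⟪Phi2 Dd Yb β τlam Ul ll - Phi2 Dd Yb β τlam Ustar lstar, ll - lstar⟫ :=
  spds_one_iteration_inequality_general Pt Dd Pb Yb ρ α β τU τlam hα hβ SU SD projU hprojU projD
    hprojD Ustar lstar hfixU hfixl Ul ll Up lp hUp hlp
end

section
/- Let G : ℝ^N → ℝ be convex and differentiable with gradient ∇G, and for j = 1,…,M let d_j : ℝ^N → ℝ be convex and differentiable with gradient ∇d_j. Let ρ ≥ 0, α > 0, β > 0, and τ_U, τ_λ ∈ (0,1). Define Φ(U,λ) = (∇G(U) + ρU + Σ_{j=1}^M λ_j ∇d_j(U) + ((1−τ_U)/α)U, −d(U) + ((1−τ_λ)/β)λ), where d(U) = (d_1(U),…,d_M(U)) ∈ ℝ^M. Then Φ is strongly monotone on ℝ^N × ℝ^M_{≥0} with constant c = min{ρ + (1−τ_U)/α, (1−τ_λ)/β}: for all U₁, U₂ ∈ ℝ^N and all λ₁, λ₂ ∈ ℝ^M with nonnegative components, ⟨Φ(U₁,λ₁) − Φ(U₂,λ₂), (U₁,λ₁) − (U₂,λ₂)⟩ ≥ c·(‖U₁ −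 U₂‖₂² + ‖λ₁ − λ₂‖₂²). -/
/-!
Convexity of a differentiable function gives the first-order inequality
`⟪∇f x, y - x⟫ ≤ f y - f x`. Adding it at `x` and at `y` shows that `∇G` is monotone, and adding
it with the nonnegative weights `λ₁ⱼ`, `λ₂ⱼ` shows that the coupling `⟪Σⱼ λⱼ ∇dⱼ(U), ΔU⟫` of the
primal block dominates the term `⟪d(U₁) - d(U₂), Δλ⟫` that the dual block subtracts. What is left
are the quadratic terms `(ρ + (1 - τ_U)/α) ‖ΔU‖²` and `((1 - τ_λ)/β) ‖Δλ‖²`.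
-/

open scoped RealInnerProductSpace

section Gradient

variable {E : Type*} [NormedAddCommGroup E] [InnerProductSpace ℝ E] [CompleteSpace E]
  {f : E → ℝ}

theorem ConvexOn.inner_le_sub_of_hasGradientAt (hf : ConvexOn ℝ Set.univ f) {x g : E}
    (h : HasGradientAt f g x) (y : E) : ⟪g, y - x⟫ ≤ f y - f x := by
  set c : ℝ →ᵃ[ℝ] E := AffineMap.lineMap x y
  have hline : HasDerivAt c (y - x) 0 := by
    simpa using AffineMap.hasDerivAt_lineMap (a := x) (b := y) (x := (0 : ℝ))
  have hderiv : HasDerivAt (f ∘ c) ⟪g, y - x⟫ 0 := by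
    have hfx := hasGradientAt_iff_hasFDerivAt.mp h
    rw [← AffineMap.lineMap_apply_zero (k := ℝ) x y] at hfx
    simpa using hfx.comp_hasDerivAt (0 : ℝ) hline
  have hconv : ConvexOn ℝ Set.univ (f ∘ c) := by
    simpa using hf.comp_affineMap c
  simpa [slope, c] using
    hconv.le_slope_of_hasDerivAt (Set.mem_univ 0) (Set.mem_univ 1) one_pos hderiv

theorem ConvexOn.inner_sub_gradient_nonneg (hf : ConvexOn ℝ Set.univ f) {gradf : E → E}
    (h : ∀ x, HasGradientAt f (gradf x) x) (x y : E) :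
    0 ≤ ⟪gradf x - gradf y, x - y⟫ := by
  have hx := hf.inner_le_sub_of_hasGradientAt (h x) y
  have hy := hf.inner_le_sub_of_hasGradientAt (h y) x
  rw [← neg_sub x y, inner_neg_right] at hx
  rw [inner_sub_left]
  linarith

theorem ConvexOn.mul_sub_le_inner_smul_gradient_sub (hf : ConvexOn ℝ Set.univ f)
    {gradf : E → E} (h : ∀ x, HasGradientAt f (gradf x) x) (x y : E) {a b : ℝ}
    (ha : 0 ≤ a) (hb : 0 ≤ b) :
    (f x - f y) * (a - b) ≤ ⟪a • gradf x - b • gradf y, x - y⟫ := by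
  have hx := hf.inner_le_sub_of_hasGradientAt (h x) y
  have hy := hf.inner_le_sub_of_hasGradientAt (h y) x
  rw [← neg_sub x y, inner_neg_right] at hx
  rw [inner_sub_left, real_inner_smul_left, real_inner_smul_left]
  nlinarith [mul_le_mul_of_nonneg_left hx ha, mul_le_mul_of_nonneg_left hy hb]

end Gradient

theorem min_mul_add_le_mul_add_mul {p q x y : ℝ} (hx : 0 ≤ x) (hy : 0 ≤ y) :
    min p q * (x + y) ≤ p * x + q * y := by
  nlinarith [mul_le_mul_of_nonneg_right (min_le_left p q) hx,
    mul_le_mul_of_nonneg_right (min_le_right p q) hy]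

theorem kkt_map_strongly_monotone_on_nonneg_duals_general
    {N M : ℕ}
    (G : EuclideanSpace ℝ (Fin N) → ℝ)
    (gradG : EuclideanSpace ℝ (Fin N) → EuclideanSpace ℝ (Fin N))
    (hGconv : ConvexOn ℝ Set.univ G)
    (hG : ∀ x, HasGradientAt G (gradG x) x)
    (d : Fin M → EuclideanSpace ℝ (Fin N) → ℝ)
    (gradd : Fin M → EuclideanSpace ℝ (Fin N) → EuclideanSpace ℝ (Fin N))
    (hdconv : ∀ j, ConvexOn ℝ Set.univ (d j))
    (hd : ∀ j x, HasGradientAt (d j) (gradd j x) x)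
    (ρ α β τU τlam : ℝ)
    (U₁ U₂ : EuclideanSpace ℝ (Fin N)) (l₁ l₂ : EuclideanSpace ℝ (Fin M))
    (hl₁ : ∀ j, 0 ≤ l₁ j) (hl₂ : ∀ j, 0 ≤ l₂ j) :
    min (ρ + (1 - τU)/α) ((1 - τlam)/β) * (‖U₁ - U₂‖^2 + ‖l₁ - l₂‖^2) ≤
      ⟪(gradG U₁ + ρ • U₁ + (∑ j, l₁ j • gradd j U₁) + ((1 - τU)/α) • U₁)
          - (gradG U₂ + ρ • U₂ + (∑ j, l₂ j • gradd j U₂) + ((1 - τU)/α) • U₂),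
        U₁ - U₂⟫
      + ⟪(-(EuclideanSpace.equiv (Fin M) ℝ).symm (fun j => d j U₁)
            + ((1 - τlam)/β) • l₁)
          - (-(EuclideanSpace.equiv (Fin M) ℝ).symm (fun j => d j U₂)
            + ((1 - τlam)/β) • l₂),
        l₁ - l₂⟫ := by
  set a := ρ + (1 - τU)/α
  set b := (1 - τlam)/β
  set e := (EuclideanSpace.equiv (Fin M) ℝ).symm
  set coupling := ∑ j, (d j U₁ - d j U₂) * (l₁ j - l₂ j)
  have hprimal : ⟪(gradG U₁ + ρ • U₁ + (∑ j, l₁ j • gradd j U₁) + ((1 - τU)/α) • U₁)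
        - (gradG U₂ + ρ • U₂ + (∑ j, l₂ j • gradd j U₂) + ((1 - τU)/α) • U₂), U₁ - U₂⟫
      = ⟪gradG U₁ - gradG U₂, U₁ - U₂⟫
        + ∑ j, ⟪l₁ j • gradd j U₁ - l₂ j • gradd j U₂, U₁ - U₂⟫ + a * ‖U₁ - U₂‖ ^ 2 := by
    rw [← sum_inner, Finset.sum_sub_distrib, ← real_inner_self_eq_norm_sq,
      ← real_inner_smul_left, ← inner_add_left, ← inner_add_left]
    congr 1
    module
  have hdual : ⟪(-e (fun j => d j U₁) + b • l₁) - (-e (fun j => d j U₂) + b • l₂), l₁ - l₂⟫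
      = -coupling + b * ‖l₁ - l₂‖ ^ 2 := by
    have hinner : ⟪e (fun j => d j U₁) - e (fun j => d j U₂), l₁ - l₂⟫ = coupling := by
      simp [e, coupling, PiLp.inner_apply, mul_comm]
    rw [← hinner, ← real_inner_self_eq_norm_sq, ← real_inner_smul_left, ← inner_neg_left,
      ← inner_add_left]
    congr 1
    module
  have hGmono := hGconv.inner_sub_gradient_nonneg hG U₁ U₂
  have hcoupling : coupling ≤ ∑ j, ⟪l₁ j • gradd j U₁ - l₂ j • gradd j U₂, U₁ - U₂⟫ :=
    Finset.sum_le_sum fun j _ =>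
      (hdconv j).mul_sub_le_inner_smul_gradient_sub (hd j) U₁ U₂ (hl₁ j) (hl₂ j)
  rw [hprimal, hdual]
  linarith [min_mul_add_le_mul_add_mul (p := a) (q := b) (sq_nonneg ‖U₁ - U₂‖)
    (sq_nonneg ‖l₁ - l₂‖)]

/-- With `G` convex differentiable, `d_j` convex differentiable,
`ρ ≥ 0`, `α, β > 0`, `τ_U, τ_λ ∈ (0,1)`, the KKT-type map
`Φ(U,λ) = (∇G(U) + ρU + Σ_j λ_j ∇d_j(U) + ((1−τ_U)/α)U, −d(U) + ((1−τ_λ)/β)λ)`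
is strongly monotone on `ℝ^N × ℝ^M_{≥0}` with constant
`c = min{ρ + (1−τ_U)/α, (1−τ_λ)/β}`. -/
theorem kkt_map_strongly_monotone_on_nonneg_duals
    {N M : ℕ}
    (G : EuclideanSpace ℝ (Fin N) → ℝ)
    (gradG : EuclideanSpace ℝ (Fin N) → EuclideanSpace ℝ (Fin N))
    (hGconv : ConvexOn ℝ Set.univ G)
    (hG : ∀ x, HasGradientAt G (gradG x) x)
    (d : Fin M → EuclideanSpace ℝ (Fin N) → ℝ)
    (gradd : Fin M → EuclideanSpace ℝ (Fin N) → EuclideanSpace ℝ (Fin N))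
    (hdconv : ∀ j, ConvexOn ℝ Set.univ (d j))
    (hd : ∀ j x, HasGradientAt (d j) (gradd j x) x)
    (ρ α β τU τlam : ℝ) (hρ : 0 ≤ ρ) (hα : 0 < α) (hβ : 0 < β)
    (hτU : τU ∈ Set.Ioo (0:ℝ) 1) (hτlam : τlam ∈ Set.Ioo (0:ℝ) 1)
    (U₁ U₂ : EuclideanSpace ℝ (Fin N)) (l₁ l₂ : EuclideanSpace ℝ (Fin M))
    (hl₁ : ∀ j, 0 ≤ l₁ j) (hl₂ : ∀ j, 0 ≤ l₂ j) :
    min (ρ + (1 - τU)/α) ((1 - τlam)/β) * (‖U₁ - U₂‖^2 + ‖l₁ - l₂‖^2) ≤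
      ⟪(gradG U₁ + ρ • U₁ + (∑ j, l₁ j • gradd j U₁) + ((1 - τU)/α) • U₁)
          - (gradG U₂ + ρ • U₂ + (∑ j, l₂ j • gradd j U₂) + ((1 - τU)/α) • U₂),
        U₁ - U₂⟫
      + ⟪(-(EuclideanSpace.equiv (Fin M) ℝ).symm (fun j => d j U₁)
            + ((1 - τlam)/β) • l₁)
          - (-(EuclideanSpace.equiv (Fin M) ℝ).symm (fun j => d j U₂)
            + ((1 - τlam)/β) • l₂),
        l₁ - l₂⟫ :=
  kkt_map_strongly_monotone_on_nonneg_duals_general G gradG hGconv hG d gradd hdconv hd ρ α β τU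
    τlam U₁ U₂ l₁ l₂ hl₁ hl₂
end

section
/- The mapping Φ is strongly monotone on all of ℝ^N × ℝ^M with constant c = min{ρ + (1−τ_U)/α, (1−τ_λ)/β}: for all (U₁,λ₁), (U₂,λ₂) ∈ ℝ^N × ℝ^M, ⟨Φ(U₁,λ₁) − Φ(U₂,λ₂), (U₁,λ₁) − (U₂,λ₂)⟩ ≥ c·(‖U₁ − U₂‖₂² + ‖λ₁ − λ₂‖₂²). -/
open scoped RealInnerProductSpace

theorem mulVecE_eq_toEuclideanLin {m n : ℕ} (A : Matrix (Fin m) (Fin n) ℝ)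
    (x : EuclideanSpace ℝ (Fin n)) : mulVecE A x = Matrix.toEuclideanLin A x :=
  rfl

theorem inner_mulVecE_transpose_left {m n : ℕ} (A : Matrix (Fin m) (Fin n) ℝ)
    (x : EuclideanSpace ℝ (Fin m)) (y : EuclideanSpace ℝ (Fin n)) :
    ⟪mulVecE A.transpose x, y⟫ = ⟪x, mulVecE A y⟫ := by
  rw [mulVecE_eq_toEuclideanLin, mulVecE_eq_toEuclideanLin,
    ← Matrix.conjTranspose_eq_transpose_of_trivial,
    Matrix.toEuclideanLin_conjTranspose_eq_adjoint, LinearMap.adjoint_inner_left]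

theorem Phi1_sub {N M K : ℕ} (Pt : Matrix (Fin K) (Fin N) ℝ)
    (Dd : Matrix (Fin M) (Fin N) ℝ) (Pb : EuclideanSpace ℝ (Fin K)) (ρ α τU : ℝ)
    (U₁ U₂ : EuclideanSpace ℝ (Fin N)) (l₁ l₂ : EuclideanSpace ℝ (Fin M)) :
    Phi1 Pt Dd Pb ρ α τU U₁ l₁ - Phi1 Pt Dd Pb ρ α τU U₂ l₂ =
      mulVecE Pt.transpose (mulVecE Pt (U₁ - U₂)) + (ρ + (1 - τU) / α) • (U₁ - U₂)
        - mulVecE Dd.transpose (l₁ - l₂) := by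
  simp only [Phi1, gradUL, mulVecE_eq_toEuclideanLin, map_add, map_sub]
  module

theorem Phi2_sub {N M : ℕ} (Dd : Matrix (Fin M) (Fin N) ℝ)
    (Yb : EuclideanSpace ℝ (Fin M)) (β τlam : ℝ)
    (U₁ U₂ : EuclideanSpace ℝ (Fin N)) (l₁ l₂ : EuclideanSpace ℝ (Fin M)) :
    Phi2 Dd Yb β τlam U₁ l₁ - Phi2 Dd Yb β τlam U₂ l₂ =
      mulVecE Dd (U₁ - U₂) + ((1 - τlam) / β) • (l₁ - l₂) := by
  simp only [Phi2, gradLL, mulVecE_eq_toEuclideanLin, map_sub]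
  module

/-- The coupling terms `-⟪D_dᵀ l, u⟫` and `⟪D_d u, l⟫` cancel, so only the
quadratic part of `Φ` survives. -/
theorem inner_Phi1_sub_add_inner_Phi2_sub {N M K : ℕ} (Pt : Matrix (Fin K) (Fin N) ℝ)
    (Dd : Matrix (Fin M) (Fin N) ℝ) (Pb : EuclideanSpace ℝ (Fin K))
    (Yb : EuclideanSpace ℝ (Fin M)) (ρ α β τU τlam : ℝ)
    (U₁ U₂ : EuclideanSpace ℝ (Fin N)) (l₁ l₂ : EuclideanSpace ℝ (Fin M)) :
    ⟪Phi1 Pt Dd Pb ρ α τU U₁ l₁ - Phi1 Pt Dd Pb ρ α τU U₂ l₂, U₁ - U₂⟫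
      + ⟪Phi2 Dd Yb β τlam U₁ l₁ - Phi2 Dd Yb β τlam U₂ l₂, l₁ - l₂⟫ =
      ‖mulVecE Pt (U₁ - U₂)‖ ^ 2 + (ρ + (1 - τU) / α) * ‖U₁ - U₂‖ ^ 2
        + (1 - τlam) / β * ‖l₁ - l₂‖ ^ 2 := by
  rw [Phi1_sub, Phi2_sub]
  generalize U₁ - U₂ = u, l₁ - l₂ = l
  simp only [inner_sub_left, inner_add_left, real_inner_smul_left,
    inner_mulVecE_transpose_left, real_inner_self_eq_norm_sq, real_inner_comm (mulVecE Dd u) l]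
  ring

theorem min_mul_add_le {R : Type*} [Semiring R] [LinearOrder R] [IsOrderedRing R]
    {a b x y : R} (hx : 0 ≤ x) (hy : 0 ≤ y) :
    min a b * (x + y) ≤ a * x + b * y := by
  rw [mul_add]
  gcongr
  · exact min_le_left a b
  · exact min_le_right a b

theorem Phi_strongly_monotone_general
    {N M K : ℕ}
    (Pt : Matrix (Fin K) (Fin N) ℝ) (Dd : Matrix (Fin M) (Fin N) ℝ)
    (Pb : EuclideanSpace ℝ (Fin K)) (Yb : EuclideanSpace ℝ (Fin M))
    (ρ α β τU τlam : ℝ)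
    (U₁ U₂ : EuclideanSpace ℝ (Fin N)) (l₁ l₂ : EuclideanSpace ℝ (Fin M)) :
    min (ρ + (1 - τU)/α) ((1 - τlam)/β) * (‖U₁ - U₂‖^2 + ‖l₁ - l₂‖^2) ≤
      ⟪Phi1 Pt Dd Pb ρ α τU U₁ l₁ - Phi1 Pt Dd Pb ρ α τU U₂ l₂, U₁ - U₂⟫
      + ⟪Phi2 Dd Yb β τlam U₁ l₁ - Phi2 Dd Yb β τlam U₂ l₂, l₁ - l₂⟫ := by
  rw [inner_Phi1_sub_add_inner_Phi2_sub]
  calc min (ρ + (1 - τU) / α) ((1 - τlam) / β) * (‖U₁ - U₂‖ ^ 2 + ‖l₁ - l₂‖ ^ 2)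
      ≤ (ρ + (1 - τU) / α) * ‖U₁ - U₂‖ ^ 2 + (1 - τlam) / β * ‖l₁ - l₂‖ ^ 2 :=
        min_mul_add_le (sq_nonneg _) (sq_nonneg _)
    _ ≤ _ := by linarith [sq_nonneg ‖mulVecE Pt (U₁ - U₂)‖]

/-- For the (affine-constraint) Lagrangian of the valley-filling problem,
the mapping `Φ` is strongly monotone on all of `ℝ^N × ℝ^M` with constant
`c = min{ρ + (1−τ_U)/α, (1−τ_λ)/β}`, where `ℝ^N × ℝ^M` carries the inner product
`⟪(U,λ),(U',λ')⟫ = ⟪U,U'⟫ + ⟪λ,λ'⟫`. -/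
theorem Phi_strongly_monotone
    {N M K : ℕ} (hN : 0 < N) (hM : 0 < M) (hK : 0 < K)
    (Pt : Matrix (Fin K) (Fin N) ℝ) (Dd : Matrix (Fin M) (Fin N) ℝ)
    (Pb : EuclideanSpace ℝ (Fin K)) (Yb : EuclideanSpace ℝ (Fin M))
    (ρ α β τU τlam : ℝ) (hρ : 0 ≤ ρ) (hα : 0 < α) (hβ : 0 < β)
    (hτU : τU ∈ Set.Ioo (0:ℝ) 1) (hτlam : τlam ∈ Set.Ioo (0:ℝ) 1)
    (U₁ U₂ : EuclideanSpace ℝ (Fin N)) (l₁ l₂ : EuclideanSpace ℝ (Fin M)) :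
    min (ρ + (1 - τU)/α) ((1 - τlam)/β) * (‖U₁ - U₂‖^2 + ‖l₁ - l₂‖^2) ≤
      ⟪Phi1 Pt Dd Pb ρ α τU U₁ l₁ - Phi1 Pt Dd Pb ρ α τU U₂ l₂, U₁ - U₂⟫
      + ⟪Phi2 Dd Yb β τlam U₁ l₁ - Phi2 Dd Yb β τlam U₂ l₂, l₁ - l₂⟫ :=
  Phi_strongly_monotone_general Pt Dd Pb Yb ρ α β τU τlam U₁ U₂ l₁ l₂
end
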